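/- Let M be a module over A = k[x_1,…,x_n] equipped with an AV-module structure π, and suppose M is finitely generated as an A-module. Then the torsion submodule of M is zero: for every nonzero f ∈ A and m ∈ M, f·m = 0 implies m = 0. -/

import Mathlib

/-!
The torsion submodule `T` of an `AV`-module is stable under every `π η`: if `a • t = 0` then the
Leibniz rule gives `a • π η t = -(η a • t)`, so `a ^ 2` kills `π η t`. The Leibniz rule then shows
that the annihilator ideal of `T` is stable under every derivation, in particular under the partial
derivatives. Since `M` is finitely generated over the Noetherian ring `A`, so is `T`, hence its
annihilator is nonzero. In characteristic zero a nonzero ideal stable under all `∂ᵢ` contains a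
nonzero constant (differentiate an element of minimal total degree), so it is all of `A`, and
`T = 0`.
-/

open MvPolynomial

attribute [local instance] LieRing.ofAssociativeRing

namespace MvPolynomial

variable {σ R : Type*} [CommSemiring R]

theorem totalDegree_pderiv_lt {f : MvPolynomial σ R} {i : σ} (h : pderiv i f ≠ 0) :
    (pderiv i f).totalDegree < f.totalDegree := by
  obtain ⟨m, hm, hmax⟩ := (pderiv i f).support.exists_mem_eq_sup
    (support_nonempty.mpr h) fun s => s.sum fun _ e => e
  have hcoeff : coeff (m + Finsupp.single i 1) f ≠ 0 := by
    have := mem_support_iff.mp hm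
    rw [coeff_pderiv] at this
    exact left_ne_zero_of_mul this
  calc (pderiv i f).totalDegree = m.sum (fun _ e => e) := hmax
    _ < (m + Finsupp.single i 1).sum (fun _ e => e) := by
      rw [Finsupp.sum_add_index' (fun _ => rfl) (fun _ _ _ => rfl), Finsupp.sum_single_index rfl]
      omega
    _ ≤ f.totalDegree := le_totalDegree (mem_support_iff.mpr hcoeff)

theorem eq_C_of_forall_pderiv_eq_zero [NoZeroDivisors R] [CharZero R] {f : MvPolynomial σ R}
    (h : ∀ i, pderiv i f = 0) : f = C (f.coeff 0) := by
  classical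
  ext m
  rw [coeff_C]
  split_ifs with hm
  · rw [hm]
  obtain ⟨i, hi⟩ := Finsupp.support_nonempty_iff.mpr (Ne.symm hm)
  have hle : Finsupp.single i 1 ≤ m :=
    Finsupp.single_le_iff.mpr (Nat.one_le_iff_ne_zero.mpr (Finsupp.mem_support_iff.mp hi))
  have := coeff_pderiv (i := i) f (m - Finsupp.single i 1)
  rw [h i, coeff_zero, tsub_add_cancel_of_le hle] at this
  exact (mul_eq_zero.mp this.symm).resolve_right (Nat.cast_add_one_ne_zero _)

theorem ideal_eq_top_of_forall_pderiv_mem {K : Type*} [Field K] [CharZero K]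
    {I : Ideal (MvPolynomial σ K)} (hI : I ≠ ⊥) (h : ∀ i, ∀ f ∈ I, pderiv i f ∈ I) : I = ⊤ := by
  obtain ⟨f, hfI, hf0⟩ := Submodule.exists_mem_ne_zero_of_ne_bot hI
  induction hd : f.totalDegree using Nat.strong_induction_on generalizing f with
  | _ d ih =>
    by_cases hconst : ∀ i, pderiv i f = 0
    · rw [eq_C_of_forall_pderiv_eq_zero hconst] at hfI hf0
      exact I.eq_top_of_isUnit_mem hfI ((isUnit_iff_ne_zero.mpr (by simpa using hf0)).map C)
    · obtain ⟨i, hi⟩ := not_forall.mp hconst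
      exact ih _ (hd ▸ totalDegree_pderiv_lt hi) _ (h i f hfI) hi rfl

end MvPolynomial

namespace Submodule

variable {A M : Type*} [CommRing A] [AddCommGroup M] [Module A M] {φ : M →+ M} {δ : A → A}

theorem apply_mem_torsion_of_leibniz (hφ : ∀ (a : A) (m : M), φ (a • m) = a • φ m + δ a • m)
    {m : M} (hm : m ∈ torsion A M) : φ m ∈ torsion A M := by
  obtain ⟨a, ha⟩ := hm
  rw [Submonoid.smul_def] at ha
  refine ⟨a * a, ?_⟩
  have hφa : (a : A) • φ m = -(δ a • m) := by
    rw [eq_neg_iff_add_eq_zero, ← hφ, ha, map_zero]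
  rw [Submonoid.smul_def, Submonoid.coe_mul, mul_smul, hφa, smul_neg, smul_comm, ha, smul_zero,
    neg_zero]

theorem apply_mem_annihilator_of_leibniz (hφ : ∀ (a : A) (m : M), φ (a • m) = a • φ m + δ a • m)
    {N : Submodule A M} (hN : ∀ m ∈ N, φ m ∈ N) {a : A} (ha : a ∈ N.annihilator) :
    δ a ∈ N.annihilator := by
  refine mem_annihilator.mpr fun m hm => ?_
  have := hφ a m
  rwa [mem_annihilator.mp ha m hm, mem_annihilator.mp ha _ (hN m hm), map_zero, zero_add,
    eq_comm] at this

theorem annihilator_torsion_ne_bot [Nontrivial A] [IsNoetherianRing A] [Module.Finite A M] :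
    (torsion A M).annihilator ≠ ⊥ := by
  have : Module.Finite A (torsion A M) := Module.IsNoetherian.finite A _
  obtain ⟨g, hgann, hg⟩ :=
    annihilator_top_inter_nonZeroDivisors (torsion_isTorsion (R := A) (M := M))
  refine (Submodule.ne_bot_iff _).mpr
    ⟨g, mem_annihilator.mpr fun m hm => ?_, nonZeroDivisors.ne_zero hg⟩
  exact congrArg Subtype.val (mem_annihilator.mp hgann ⟨m, hm⟩ mem_top)

end Submodule

theorem av_module_torsion_free_affine_space_general
    (k : Type*) [Field k] [CharZero k] (n : ℕ)
    (M : Type*) [AddCommGroup M] [Module k M]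
    [Module (MvPolynomial (Fin n) k) M]
    (π : Derivation k (MvPolynomial (Fin n) k) (MvPolynomial (Fin n) k)
        →ₗ⁅k⁆ Module.End k M)
    (hLeibniz : ∀ (η : Derivation k (MvPolynomial (Fin n) k) (MvPolynomial (Fin n) k))
        (f : MvPolynomial (Fin n) k) (m : M),
        π η (f • m) = f • (π η m) + (η f) • m)
    [Module.Finite (MvPolynomial (Fin n) k) M] :
    ∀ (f : MvPolynomial (Fin n) k) (m : M), f ≠ 0 → f • m = 0 → m = 0 := by
  intro f m hf hfm
  set T := Submodule.torsion (MvPolynomial (Fin n) k) M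
  have hT_stable (i : Fin n) : ∀ t ∈ T, π (pderiv i) t ∈ T := fun _ =>
    Submodule.apply_mem_torsion_of_leibniz (φ := (π (pderiv i)).toAddMonoidHom) (hLeibniz _)
  have hann : T.annihilator = ⊤ :=
    ideal_eq_top_of_forall_pderiv_mem Submodule.annihilator_torsion_ne_bot fun i _ =>
      Submodule.apply_mem_annihilator_of_leibniz (φ := (π (pderiv i)).toAddMonoidHom)
        (hLeibniz _) (hT_stable i)
  have hm : m ∈ T := ⟨⟨f, mem_nonZeroDivisors_of_ne_zero hf⟩, hfm⟩
  rwa [Submodule.annihilator_eq_top_iff.mp hann] at hm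

/-- Let `M` be an `AV`-module over `A = k[x_1, …, x_n]` which is finitely
generated as an `A`-module.  Then the torsion submodule of `M` is zero: for every nonzero
`f ∈ A` and `m ∈ M`, `f • m = 0` implies `m = 0`. -/
theorem av_module_torsion_free_affine_space
    (k : Type*) [Field k] [IsAlgClosed k] [CharZero k] (n : ℕ)
    (M : Type*) [AddCommGroup M] [Module k M]
    [Module (MvPolynomial (Fin n) k) M] [IsScalarTower k (MvPolynomial (Fin n) k) M]
    (π : Derivation k (MvPolynomial (Fin n) k) (MvPolynomial (Fin n) k)
        →ₗ⁅k⁆ Module.End k M)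
    (hLeibniz : ∀ (η : Derivation k (MvPolynomial (Fin n) k) (MvPolynomial (Fin n) k))
        (f : MvPolynomial (Fin n) k) (m : M),
        π η (f • m) = f • (π η m) + (η f) • m)
    [Module.Finite (MvPolynomial (Fin n) k) M] :
    ∀ (f : MvPolynomial (Fin n) k) (m : M), f ≠ 0 → f • m = 0 → m = 0 :=
  av_module_torsion_free_affine_space_general k n M π hLeibniz
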